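/- For n ≥ 1, the number of overpartitions π of n with at least one non-overlined part such that ℓ_{O<N}(π) is even, minus the number with ℓ_{O<N}(π) odd, equals H(n), the number of overpartitions λ of n with at least one non-overlined part such that all non-overlined parts of λ are equal and every overlined part of λ has size ≥ that common non-overlined part size. Here ℓ_{O<N}(π) is the number of overlined parts of π of size strictly less than the largest non-overlined part of π. -/

import Mathlib

open scoped Classical

/-- An overpartition of `n`: a finite set of overlined part sizes (the first
occurrence of a size may be overlined, so overlined parts are distinct)
together with a multiset of non-overlined parts, all parts positive,
with total sum `n`. -/
structure Overpartition (n : ℕ) where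
  overl : Finset ℕ
  plain : Multiset ℕ
  over_pos : ∀ x ∈ overl, 0 < x
  plain_pos : ∀ x ∈ plain, 0 < x
  sum_eq : (∑ x ∈ overl, x) + plain.sum = n

/-!
Let `N` (`maxPlain`) be the largest non-overlined part of `π` and `m` (`pivot`) the largest part
size below `N`, overlined or not. Toggling the overline on one part of size `m` (overlining a
non-overlined `m` if there is no overlined `m`, un-overlining the overlined `m` otherwise) changes
neither the part sizes nor `N`, hence not `m`: it is an involution, and it changes `ℓ_{O<N}` by
exactly one. It pairs off, with opposite signs, all overpartitions having a part size below `N`.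
The others are exactly those counted by `H(n)`, and they have `ℓ_{O<N} = 0`.
-/

open Finset in
theorem card_even_sub_card_odd_of_involutive {α : Type*} [Finite α] {P Q : α → Prop}
    {f : α → ℕ} {ι : α → α} (hι : Function.Involutive ι)
    (hQ : ∀ a, P a → Q a → Even (f a))
    (hmaps : ∀ a, P a → ¬Q a → P (ι a) ∧ ¬Q (ι a))
    (hflip : ∀ a, P a → ¬Q a → (Even (f (ι a)) ↔ Odd (f a))) :
    (Nat.card {a // P a ∧ Even (f a)} : ℤ) - Nat.card {a // P a ∧ Odd (f a)} =
      Nat.card {a // P a ∧ Q a} := by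
  have := Fintype.ofFinite α
  simp only [Nat.card_eq_fintype_card, Fintype.card_subtype]
  have hsplit :
      #{a | P a ∧ Even (f a)} = #{a | P a ∧ Q a} + #{a | (P a ∧ ¬Q a) ∧ Even (f a)} := by
    rw [← card_filter_add_card_filter_not (s := {a | P a ∧ Even (f a)}) Q,
      filter_filter, filter_filter]
    congr 2 <;> ext a <;> simp only [mem_filter, mem_univ, true_and]
    · exact ⟨fun h => ⟨h.1.1, h.2⟩, fun h => ⟨⟨h.1, hQ a h.1 h.2⟩, h.2⟩⟩
    · tauto
  have hodd : #{a | P a ∧ Odd (f a)} = #{a | (P a ∧ ¬Q a) ∧ Odd (f a)} := by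
    congr 1; ext a
    simp only [mem_filter, mem_univ, true_and]
    exact ⟨fun h => ⟨⟨h.1, fun hq => Nat.not_even_iff_odd.mpr h.2 (hQ a h.1 hq)⟩, h.2⟩,
      fun h => ⟨h.1.1, h.2⟩⟩
  have hpair : #{a | (P a ∧ ¬Q a) ∧ Even (f a)} = #{a | (P a ∧ ¬Q a) ∧ Odd (f a)} := by
    refine card_nbij' ι ι ?_ ?_ (fun a _ => hι a) (fun a _ => hι a) <;>
      intro a ha <;> simp only [coe_filter, mem_univ, true_and, Set.mem_ofPred_eq] at ha ⊢ <;>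
      obtain ⟨⟨hP, hnQ⟩, hpar⟩ := ha
    · obtain ⟨hP', hnQ'⟩ := hmaps a hP hnQ
      refine ⟨⟨hP', hnQ'⟩, (hflip _ hP' hnQ').1 ?_⟩
      rwa [hι]
    · exact ⟨hmaps a hP hnQ, (hflip a hP hnQ).2 hpar⟩
  omega

theorem Multiset.finite_setOf_pos_sum_le (n : ℕ) :
    {s : Multiset ℕ | (∀ x ∈ s, 0 < x) ∧ s.sum ≤ n}.Finite := by
  refine (Set.Finite.biUnion (Finset.range (n + 1)).finite_toSet
    fun k _ => Set.finite_range (Nat.Partition.parts (n := k))).subset ?_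
  rintro s ⟨hpos, hsum⟩
  simp only [Set.mem_iUnion, Finset.coe_range, Set.mem_Iio, Set.mem_range]
  exact ⟨s.sum, by omega, ⟨s, hpos _, rfl⟩, rfl⟩

namespace Overpartition

open scoped Finset

variable {n : ℕ}

theorem ext {π σ : Overpartition n} (ho : π.overl = σ.overl) (hp : π.plain = σ.plain) :
    π = σ := by
  cases π; cases σ; simp_all

instance : Finite (Overpartition n) := by
  let parts : Overpartition n → Multiset ℕ × Multiset ℕ := fun π => (π.overl.val, π.plain)
  have : Finite (Set.range parts) := by
    refine Set.Finite.to_subtype <| ((Multiset.finite_setOf_pos_sum_le n).prod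
      (Multiset.finite_setOf_pos_sum_le n)).subset ?_
    rintro _ ⟨π, rfl⟩
    have hsum : π.overl.val.sum + π.plain.sum = n := by simpa using π.sum_eq
    exact ⟨⟨π.over_pos, show π.overl.val.sum ≤ n by omega⟩,
      ⟨π.plain_pos, show π.plain.sum ≤ n by omega⟩⟩
  exact Finite.of_injective_finite_range (f := parts)
    fun π σ h => ext (Finset.val_inj.mp (Prod.ext_iff.mp h).1) (Prod.ext_iff.mp h).2

def sizes (π : Overpartition n) : Finset ℕ := π.overl ∪ π.plain.toFinset

def maxPlain (π : Overpartition n) : ℕ := π.plain.toFinset.sup id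

def sizesBelow (π : Overpartition n) : Finset ℕ := π.sizes.filter (· < π.maxPlain)

/-- This is `0` when `sizesBelow π = ∅`; as `0` is never a part, `togglePivot` then fixes `π`.
-/
def pivot (π : Overpartition n) : ℕ := π.sizesBelow.sup id

def numOverlBelow (π : Overpartition n) : ℕ := #(π.overl.filter (· < π.maxPlain))

def toggle (k : ℕ) (π : Overpartition n) : Overpartition n :=
  if hk : k ∈ π.overl then
    { overl := π.overl.erase k
      plain := k ::ₘ π.plain
      over_pos := fun x hx => π.over_pos x (Finset.mem_of_mem_erase hx)
      plain_pos := Multiset.forall_mem_cons.2 ⟨π.over_pos k hk, π.plain_pos⟩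
      sum_eq := by
        have := Finset.add_sum_erase π.overl (fun x => x) hk
        rw [Multiset.sum_cons]
        linarith [π.sum_eq] }
  else if hk' : k ∈ π.plain then
    { overl := insert k π.overl
      plain := π.plain.erase k
      over_pos := Finset.forall_mem_insert _ _ _ |>.2 ⟨π.plain_pos k hk', π.over_pos⟩
      plain_pos := fun x hx => π.plain_pos x (Multiset.mem_of_mem_erase hx)
      sum_eq := by
        have := Multiset.sum_erase hk'
        rw [Finset.sum_insert hk]
        linarith [π.sum_eq] }
  else π

def togglePivot (π : Overpartition n) : Overpartition n := π.toggle π.pivot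

variable {π : Overpartition n} {k : ℕ}

theorem le_maxPlain {y : ℕ} (hy : y ∈ π.plain) : y ≤ π.maxPlain :=
  Finset.le_sup (f := id) (Multiset.mem_toFinset.2 hy)

theorem lt_maxPlain_iff {x : ℕ} : x < π.maxPlain ↔ ∃ y ∈ π.plain, x < y := by
  simp [maxPlain, Finset.lt_sup_iff]

theorem maxPlain_mem (h : π.plain ≠ 0) : π.maxPlain ∈ π.plain := by
  obtain ⟨y, hy, hsup⟩ := Finset.exists_mem_eq_sup _ (Multiset.toFinset_nonempty.2 h) id
  rw [maxPlain, hsup]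
  exact Multiset.mem_toFinset.1 hy

theorem plain_ne_zero_iff : π.plain ≠ 0 ↔ 0 < π.maxPlain := by
  refine ⟨fun h => π.plain_pos _ (maxPlain_mem h), fun h => ?_⟩
  obtain ⟨y, hy, -⟩ := lt_maxPlain_iff.1 h
  intro h0
  simp [h0] at hy

theorem zero_notMem_sizes : 0 ∉ π.sizes := by
  simp only [sizes, Finset.mem_union, Multiset.mem_toFinset, not_or]
  exact ⟨fun h => (π.over_pos 0 h).false, fun h => (π.plain_pos 0 h).false⟩

theorem card_filter_exists_lt :
    #(π.overl.filter fun x => ∃ y ∈ π.plain, x < y) = π.numOverlBelow := by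
  rw [numOverlBelow, Finset.filter_congr fun _ _ => lt_maxPlain_iff]

theorem toggle_of_mem_overl (hk : k ∈ π.overl) :
    (π.toggle k).overl = π.overl.erase k ∧ (π.toggle k).plain = k ::ₘ π.plain := by
  simp [toggle, hk]

theorem toggle_of_mem_plain (hk : k ∉ π.overl) (hk' : k ∈ π.plain) :
    (π.toggle k).overl = insert k π.overl ∧ (π.toggle k).plain = π.plain.erase k := by
  simp [toggle, hk, hk']

theorem toggle_of_notMem_sizes (hk : k ∉ π.sizes) : π.toggle k = π := by
  simp only [sizes, Finset.mem_union, Multiset.mem_toFinset, not_or] at hk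
  simp [toggle, hk]

theorem toggle_involutive (k : ℕ) : Function.Involutive (toggle k : Overpartition n → _) := by
  intro π
  by_cases ho : k ∈ π.overl
  · obtain ⟨h1, h2⟩ := toggle_of_mem_overl ho
    obtain ⟨h3, h4⟩ := toggle_of_mem_plain (h1 ▸ Finset.notMem_erase k _)
      (h2 ▸ Multiset.mem_cons_self k _)
    exact ext (by rw [h3, h1, Finset.insert_erase ho]) (by rw [h4, h2, Multiset.erase_cons_head])
  by_cases hp : k ∈ π.plain
  · obtain ⟨h1, h2⟩ := toggle_of_mem_plain ho hp
    obtain ⟨h3, h4⟩ := toggle_of_mem_overl (h1 ▸ Finset.mem_insert_self k _)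
    exact ext (by rw [h3, h1, Finset.erase_insert ho]) (by rw [h4, h2, Multiset.cons_erase hp])
  have hk : k ∉ π.sizes := by simp [sizes, ho, hp]
  rw [toggle_of_notMem_sizes hk, toggle_of_notMem_sizes hk]

theorem sizes_toggle : (π.toggle k).sizes = π.sizes := by
  by_cases ho : k ∈ π.overl
  · obtain ⟨h1, h2⟩ := toggle_of_mem_overl ho
    rw [sizes, sizes, h1, h2, Multiset.toFinset_cons, Finset.union_insert, ← Finset.insert_union,
      Finset.insert_erase ho]
  by_cases hp : k ∈ π.plain
  · obtain ⟨h1, h2⟩ := toggle_of_mem_plain ho hp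
    ext x
    by_cases hx : x = k
    · subst hx; simp [sizes, h1, hp]
    · simp [sizes, h1, h2, Multiset.mem_erase_of_ne hx, hx]
  · rw [toggle_of_notMem_sizes (by simp [sizes, ho, hp])]

theorem maxPlain_toggle (hk : k < π.maxPlain) : (π.toggle k).maxPlain = π.maxPlain := by
  by_cases ho : k ∈ π.overl
  · rw [maxPlain, (toggle_of_mem_overl ho).2, Multiset.toFinset_cons, Finset.sup_insert]
    exact max_eq_right hk.le
  by_cases hp : k ∈ π.plain
  · have hN := maxPlain_mem (plain_ne_zero_iff.2 (k.zero_le.trans_lt hk))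
    rw [maxPlain, (toggle_of_mem_plain ho hp).2]
    refine le_antisymm (Finset.sup_mono (Multiset.toFinset_subset.2 (Multiset.erase_subset _ _)))
      (Finset.le_sup (f := id) (Multiset.mem_toFinset.2 ?_))
    exact (Multiset.mem_erase_of_ne hk.ne').2 hN
  · rw [toggle_of_notMem_sizes (by simp [sizes, ho, hp])]

theorem even_numOverlBelow_toggle_iff (hk : k ∈ π.sizesBelow) :
    Even (π.toggle k).numOverlBelow ↔ ¬Even π.numOverlBelow := by
  obtain ⟨hks, hkN⟩ := Finset.mem_filter.1 hk
  rw [numOverlBelow, numOverlBelow, maxPlain_toggle hkN]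
  by_cases ho : k ∈ π.overl
  · have hmem : k ∈ π.overl.filter (· < π.maxPlain) := Finset.mem_filter.2 ⟨ho, hkN⟩
    rw [(toggle_of_mem_overl ho).1, Finset.filter_erase,
      ← Finset.card_erase_add_one hmem, Nat.even_add_one, not_not]
  · have hp : k ∈ π.plain := by simpa [sizes, ho] using hks
    rw [(toggle_of_mem_plain ho hp).1, Finset.filter_insert, if_pos hkN,
      Finset.card_insert_of_notMem (fun h => ho (Finset.mem_of_mem_filter k h)), Nat.even_add_one]

theorem pivot_mem (h : π.sizesBelow.Nonempty) : π.pivot ∈ π.sizesBelow := by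
  obtain ⟨x, hx, hsup⟩ := Finset.exists_mem_eq_sup _ h id
  rw [pivot, hsup]
  exact hx

theorem maxPlain_togglePivot : π.togglePivot.maxPlain = π.maxPlain := by
  rcases π.sizesBelow.eq_empty_or_nonempty with h | h
  · rw [togglePivot, pivot, h, Finset.sup_empty, Nat.bot_eq_zero,
      toggle_of_notMem_sizes zero_notMem_sizes]
  · exact maxPlain_toggle (Finset.mem_filter.1 (pivot_mem h)).2

theorem sizesBelow_togglePivot : π.togglePivot.sizesBelow = π.sizesBelow := by
  rw [sizesBelow, sizesBelow, maxPlain_togglePivot, togglePivot, sizes_toggle]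

theorem togglePivot_involutive : Function.Involutive (togglePivot : Overpartition n → _) := by
  intro π
  rw [togglePivot, pivot, sizesBelow_togglePivot, ← pivot]
  exact toggle_involutive _ _

theorem sizesBelow_eq_empty_iff (h : π.plain ≠ 0) :
    π.sizesBelow = ∅ ↔
      (∀ x ∈ π.plain, ∀ y ∈ π.plain, x = y) ∧ (∀ x ∈ π.overl, ∀ y ∈ π.plain, y ≤ x) := by
  simp only [sizesBelow, sizes, Finset.filter_eq_empty_iff, Finset.mem_union,
    Multiset.mem_toFinset, not_lt]
  constructor
  · intro hge
    have hplain : ∀ x ∈ π.plain, x = π.maxPlain :=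
      fun x hx => le_antisymm (le_maxPlain hx) (hge (Or.inr hx))
    exact ⟨fun x hx y hy => (hplain x hx).trans (hplain y hy).symm,
      fun x hx y hy => (le_maxPlain hy).trans (hge (Or.inl hx))⟩
  · rintro ⟨hplain, hoverl⟩ x (hx | hx)
    · exact hoverl x hx _ (maxPlain_mem h)
    · exact (hplain x hx _ (maxPlain_mem h)).ge

theorem numOverlBelow_eq_zero (h : π.sizesBelow = ∅) : π.numOverlBelow = 0 := by
  rw [numOverlBelow, Finset.card_eq_zero, ← Finset.subset_empty, ← h]
  exact Finset.filter_subset_filter _ Finset.subset_union_left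

end Overpartition

open Overpartition in
theorem stmt_10_general (n : ℕ) :
    (Nat.card {π : Overpartition n // π.plain ≠ 0 ∧
        Even ((π.overl.filter (fun x => ∃ y ∈ π.plain, x < y)).card)} : ℤ) -
      Nat.card {π : Overpartition n // π.plain ≠ 0 ∧
        Odd ((π.overl.filter (fun x => ∃ y ∈ π.plain, x < y)).card)} =
    Nat.card {lam : Overpartition n // lam.plain ≠ 0 ∧
        (∀ x ∈ lam.plain, ∀ y ∈ lam.plain, x = y) ∧
        (∀ x ∈ lam.overl, ∀ y ∈ lam.plain, y ≤ x)} := by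
  simp only [card_filter_exists_lt]
  refine card_even_sub_card_odd_of_involutive togglePivot_involutive ?_ ?_ ?_
  · intro π h0 hfixed
    exact (numOverlBelow_eq_zero ((sizesBelow_eq_empty_iff h0).2 hfixed)).symm ▸ Even.zero
  · intro π h0 hmoved
    rw [← sizesBelow_eq_empty_iff h0] at hmoved
    have h0' : π.togglePivot.plain ≠ 0 := by
      rwa [plain_ne_zero_iff, maxPlain_togglePivot, ← plain_ne_zero_iff]
    rwa [← sizesBelow_eq_empty_iff h0', sizesBelow_togglePivot, and_iff_right h0']
  · intro π h0 hmoved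
    rw [← sizesBelow_eq_empty_iff h0, ← ne_eq, ← Finset.nonempty_iff_ne_empty] at hmoved
    rw [← Nat.not_even_iff_odd]
    exact even_numOverlBelow_toggle_iff (pivot_mem hmoved)

theorem stmt_10 (n : ℕ) (hn : 1 ≤ n) :
    (Nat.card {π : Overpartition n // π.plain ≠ 0 ∧
        Even ((π.overl.filter (fun x => ∃ y ∈ π.plain, x < y)).card)} : ℤ) -
      Nat.card {π : Overpartition n // π.plain ≠ 0 ∧
        Odd ((π.overl.filter (fun x => ∃ y ∈ π.plain, x < y)).card)} =
    Nat.card {lam : Overpartition n // lam.plain ≠ 0 ∧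
        (∀ x ∈ lam.plain, ∀ y ∈ lam.plain, x = y) ∧
        (∀ x ∈ lam.overl, ∀ y ∈ lam.plain, y ≤ x)} :=
  stmt_10_general n
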